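/- Second-moment identity for the score: under the same model, E[θ(E,S,Δ)²] = (1/M)·∫_{0<s≤e≤M} φ(s)²/(e·G(s)) de ds + (1/M)·∫_{0<e<s} (φ(s)−φ(s−e))²/(e·(G(s)−G(s−e))) de ds, with 0/0 := 0. -/

import Mathlib

/-!
Given `W = w`, the pair `(E, S)` has density `ρ(e, s - w)`, where `ρ` is the density of `(E, V)`;
integrating out `W` gives the density `(1 / (M e)) · P(s - e < W < s) = (G s - G (s - e)) / (M e)`
of `(E, S)` for almost every `(e, s)`, since the law of `W` has only countably many atoms.
Against `θ²` the factor `G s - G (s - e)` cancels one power of the denominator of `θ` (on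
`s ≤ e` it is `G s`, as `G (s - e) = 0`). Finally `|θ| ≤ C`, because increments of `φ` are
controlled by those of `G`, so every integral involved is finite and the identity in `ℝ≥0∞`
transfers to Bochner integrals.
-/

open MeasureTheory Set
open scoped ENNReal

theorem abs_div_le_of_abs_le_mul_abs {x y C : ℝ} (hC : 0 ≤ C) (h : |x| ≤ C * |y|) :
    |x / y| ≤ C := by
  rcases eq_or_ne y 0 with rfl | hy
  · simpa using hC
  · rw [abs_div, div_le_iff₀ (abs_pos.mpr hy)]
    exact h

theorem one_div_mul_mul_mul_div_sq (M e d a : ℝ) :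
    1 / (M * e) * d * (a / d) ^ 2 = 1 / M * (a ^ 2 / (e * d)) := by
  rcases eq_or_ne d 0 with rfl | hd
  · simp
  · field_simp

theorem measure_Ioo_eq_ofReal_sub {ν : Measure ℝ} {G : ℝ → ℝ}
    (hcdf : ∀ s, ν (Iic s) = ENNReal.ofReal (G s)) (hG : Monotone G) (hG_nonneg : ∀ s, 0 ≤ G s)
    {a b : ℝ} (hb : ν {b} = 0) : ν (Ioo a b) = ENNReal.ofReal (G b - G a) := by
  rcases le_or_gt b a with hba | hab
  · rw [Ioo_eq_empty hba.not_gt, measure_empty, eq_comm, ENNReal.ofReal_eq_zero, sub_nonpos]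
    exact hG hba
  · rw [measure_congr (Ioo_ae_eq_Ioc' hb), ← Iic_sdiff_Iic,
      measure_sdiff (Iic_subset_Iic.mpr hab.le) measurableSet_Iic.nullMeasurableSet
        (by simp [hcdf]), hcdf, hcdf, ENNReal.ofReal_sub _ (hG_nonneg a)]

theorem countable_setOf_measure_singleton_ne_zero (ν : Measure ℝ) [SFinite ν] :
    {x : ℝ | ν {x} ≠ 0}.Countable := by
  simpa [pos_iff_ne_zero] using Measure.countable_meas_pos_of_disjoint_iUnion (μ := ν)
    (As := fun x : ℝ => {x}) measurableSet_singleton (fun x y hxy => disjoint_singleton.mpr hxy)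

theorem ae_fst_ne_and_measure_singleton_snd_eq_zero (ν : Measure ℝ) [SFinite ν] (a : ℝ) :
    ∀ᵐ p : ℝ × ℝ, p.1 ≠ a ∧ ν {p.2} = 0 := by
  rw [Measure.volume_eq_prod]
  have hfst : ∀ᵐ p ∂(volume.prod volume : Measure (ℝ × ℝ)), p.1 ≠ a :=
    Measure.quasiMeasurePreserving_fst.ae (Measure.ae_ne volume a)
  have hsnd : ∀ᵐ p ∂(volume.prod volume : Measure (ℝ × ℝ)), p.2 ∉ {x : ℝ | ν {x} ≠ 0} :=
    Measure.quasiMeasurePreserving_snd.ae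
    ((countable_setOf_measure_singleton_ne_zero ν).ae_notMem volume)
  filter_upwards [hfst, hsnd] with p h1 h2
  simpa using And.intro h1 h2

theorem lintegral_prod_withDensity_comp_add {ρ : ℝ × ℝ → ℝ≥0∞} (hρ : Measurable ρ)
    (ν : Measure ℝ) [SFinite ν] {f : ℝ × ℝ → ℝ≥0∞} (hf : Measurable f) :
    ∫⁻ q, f (q.1.1, q.1.2 + q.2) ∂((volume.withDensity ρ).prod ν) =
      ∫⁻ p, (∫⁻ w, ρ (p.1, p.2 - w) ∂ν) * f p := by
  have hshift : ∀ w, ∫⁻ p, f (p.1, p.2 + w) ∂(volume.withDensity ρ) =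
      ∫⁻ p, ρ (p.1, p.2 - w) * f p := by
    intro w
    rw [lintegral_withDensity_eq_lintegral_mul _ hρ (by fun_prop),
      ← lintegral_add_right_eq_self (fun p : ℝ × ℝ => ρ (p.1, p.2 - w) * f p) (0, w)]
    simp [Prod.add_def]
  rw [lintegral_prod_symm _ (by fun_prop)]
  simp_rw [hshift]
  rw [lintegral_lintegral_swap (by fun_prop)]
  exact lintegral_congr fun p => lintegral_mul_const _ (by fun_prop)

theorem lintegral_comp_add_of_indepFun {Ω : Type*} [MeasurableSpace Ω] {ℙ : Measure Ω}
    [IsFiniteMeasure ℙ] {X : Ω → ℝ × ℝ} {W : Ω → ℝ} (hX : Measurable X) (hW : Measurable W)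
    {ρ : ℝ × ℝ → ℝ≥0∞} (hρ : Measurable ρ) (hlaw : ℙ.map X = volume.withDensity ρ)
    (hindep : ProbabilityTheory.IndepFun X W ℙ) {f : ℝ × ℝ → ℝ≥0∞} (hf : Measurable f) :
    ∫⁻ ω, f ((X ω).1, (X ω).2 + W ω) ∂ℙ = ∫⁻ p, (∫⁻ w, ρ (p.1, p.2 - w) ∂(ℙ.map W)) * f p := by
  have hprod : ℙ.map (fun ω => (X ω, W ω)) = (volume.withDensity ρ).prod (ℙ.map W) := by
    rw [← hlaw]
    exact hindep.map_prod_eq_prod_map_map hX.aemeasurable hW.aemeasurable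
  rw [← lintegral_prod_withDensity_comp_add hρ _ hf, ← hprod,
    lintegral_map (by fun_prop) (hX.prodMk hW)]

/-- Density of `(E, V)`: `E` uniform on `(0, M)`, and `V` uniform on `(0, E)` given `E`. -/
noncomputable def incubationDensity (M : ℝ) (p : ℝ × ℝ) : ℝ :=
  if 0 < p.2 ∧ p.2 < p.1 ∧ p.1 < M then 1 / (M * p.1) else 0

@[fun_prop]
theorem measurable_incubationDensity (M : ℝ) : Measurable (incubationDensity M) := by
  unfold incubationDensity
  exact Measurable.ite (by measurability) (by fun_prop) measurable_const

theorem lintegral_incubationDensity_sub (M e s : ℝ) (ν : Measure ℝ) :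
    ∫⁻ w, ENNReal.ofReal (incubationDensity M (e, s - w)) ∂ν =
      ENNReal.ofReal (if e < M then 1 / (M * e) else 0) * ν (Ioo (s - e) s) := by
  rw [← lintegral_indicator_const measurableSet_Ioo]
  refine lintegral_congr fun w => ?_
  simp only [incubationDensity, indicator, mem_Ioo]
  split_ifs <;> first | rfl | (exfalso; grind) | simp

/-- The score `θ(e, s, 1_{s ≤ e})`; Lean's `x / 0 = 0` realises the convention `0 / 0 := 0`. -/
noncomputable def score (φ G : ℝ → ℝ) (e s : ℝ) : ℝ :=
  if s ≤ e then φ s / G s else (φ s - φ (s - e)) / (G s - G (s - e))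

noncomputable def scoreSqIntegrandLe (M : ℝ) (φ G : ℝ → ℝ) (p : ℝ × ℝ) : ℝ :=
  if 0 < p.2 ∧ p.2 ≤ p.1 ∧ p.1 ≤ M then φ p.2 ^ 2 / (p.1 * G p.2) else 0

noncomputable def scoreSqIntegrandGt (M : ℝ) (φ G : ℝ → ℝ) (p : ℝ × ℝ) : ℝ :=
  if 0 < p.1 ∧ p.1 < p.2 ∧ p.1 ≤ M then
    (φ p.2 - φ (p.2 - p.1)) ^ 2 / (p.1 * (G p.2 - G (p.2 - p.1))) else 0

section Score

variable {φ G : ℝ → ℝ}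

theorem measurable_score (hφ : Measurable φ) (hG : Measurable G) :
    Measurable (Function.uncurry (score φ G)) := by
  unfold score Function.uncurry
  exact Measurable.ite (by measurability) (by fun_prop) (by fun_prop)

@[fun_prop]
theorem measurable_scoreSqIntegrandLe (M : ℝ) (hφ : Measurable φ) (hG : Measurable G) :
    Measurable (scoreSqIntegrandLe M φ G) := by
  unfold scoreSqIntegrandLe
  exact Measurable.ite (by measurability) (by fun_prop) measurable_const

@[fun_prop]
theorem measurable_scoreSqIntegrandGt (M : ℝ) (hφ : Measurable φ) (hG : Measurable G) :
    Measurable (scoreSqIntegrandGt M φ G) := by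
  unfold scoreSqIntegrandGt
  exact Measurable.ite (by measurability) (by fun_prop) measurable_const

theorem scoreSqIntegrandLe_nonneg (M : ℝ) (hG : ∀ s, 0 ≤ G s) (p : ℝ × ℝ) :
    0 ≤ scoreSqIntegrandLe M φ G p := by
  unfold scoreSqIntegrandLe
  split_ifs with h
  · exact div_nonneg (sq_nonneg _) (mul_nonneg (h.1.le.trans h.2.1) (hG _))
  · exact le_rfl

theorem scoreSqIntegrandGt_nonneg (M : ℝ) (hG : Monotone G) (p : ℝ × ℝ) :
    0 ≤ scoreSqIntegrandGt M φ G p := by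
  unfold scoreSqIntegrandGt
  split_ifs with h
  · exact div_nonneg (sq_nonneg _) (mul_nonneg h.1.le (sub_nonneg.mpr (hG (by linarith))))
  · exact le_rfl

theorem abs_score_le {C : ℝ} (hC : 0 ≤ C) (hφG : ∀ s t, |φ s - φ t| ≤ C * |G s - G t|)
    (hφ0 : φ 0 = 0) (hG0 : G 0 = 0) (e s : ℝ) : |score φ G e s| ≤ C := by
  unfold score
  split_ifs
  · simpa [hφ0, hG0] using abs_div_le_of_abs_le_mul_abs hC (hφG s 0)
  · exact abs_div_le_of_abs_le_mul_abs hC (hφG s (s - e))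

theorem rate_mul_mul_score_sq_eq {M : ℝ} (hG0 : ∀ s ≤ 0, G s = 0) {e s : ℝ}
    (he0 : 0 < e) (heM : e ≠ M) :
    (if e < M then 1 / (M * e) else 0) * (G s - G (s - e)) * score φ G e s ^ 2 =
      1 / M * (scoreSqIntegrandLe M φ G (e, s) + scoreSqIntegrandGt M φ G (e, s)) := by
  rcases heM.lt_or_gt with heM | hMe
  · rcases le_or_gt s e with hse | hes
    · have hGse : G (s - e) = 0 := hG0 _ (by linarith)
      rcases le_or_gt s 0 with hs0 | hs0
      · simp [scoreSqIntegrandLe, scoreSqIntegrandGt, hG0 s hs0, hGse, hs0.not_gt,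
          hse.not_gt]
      · simpa [score, scoreSqIntegrandLe, scoreSqIntegrandGt, heM, hse, hs0, heM.le, hGse,
          hse.not_gt] using one_div_mul_mul_mul_div_sq M e (G s) (φ s)
    · simpa [score, scoreSqIntegrandLe, scoreSqIntegrandGt, heM, hes, he0, heM.le,
        hes.not_ge] using one_div_mul_mul_mul_div_sq M e (G s - G (s - e)) (φ s - φ (s - e))
  · simp [scoreSqIntegrandLe, scoreSqIntegrandGt, hMe.not_gt, hMe.not_ge]

theorem ofReal_rate_mul_mul_score_sq_eq {M : ℝ} (hM : 0 < M) (hG : Monotone G)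
    (hG_nonneg : ∀ s, 0 ≤ G s) (hG0 : ∀ s ≤ 0, G s = 0) {e s : ℝ} (heM : e ≠ M) :
    ENNReal.ofReal (if e < M then 1 / (M * e) else 0) * ENNReal.ofReal (G s - G (s - e)) *
        ENNReal.ofReal (score φ G e s ^ 2) =
      ENNReal.ofReal (1 / M) * (ENNReal.ofReal (scoreSqIntegrandLe M φ G (e, s)) +
        ENNReal.ofReal (scoreSqIntegrandGt M φ G (e, s))) := by
  rcases le_or_gt e 0 with he0 | he0
  · have hrate : ENNReal.ofReal (if e < M then 1 / (M * e) else 0) = 0 := by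
      rw [ENNReal.ofReal_eq_zero]
      split_ifs
      · exact div_nonpos_of_nonneg_of_nonpos zero_le_one
          (mul_nonpos_of_nonneg_of_nonpos hM.le he0)
      · exact le_rfl
    have hLe : scoreSqIntegrandLe M φ G (e, s) = 0 := if_neg fun h => by linarith [h.1, h.2.1]
    have hGt : scoreSqIntegrandGt M φ G (e, s) = 0 := if_neg fun h => by linarith [h.1]
    rw [hrate, hLe, hGt]
    simp
  · have hrate : 0 ≤ if e < M then 1 / (M * e) else 0 := by split_ifs <;> positivity
    rw [← ENNReal.ofReal_mul hrate,
      ← ENNReal.ofReal_mul (mul_nonneg hrate (sub_nonneg.mpr (hG (by linarith)))),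
      rate_mul_mul_score_sq_eq hG0 he0 heM,
      ENNReal.ofReal_mul (by positivity),
      ENNReal.ofReal_add (scoreSqIntegrandLe_nonneg M hG_nonneg _)
        (scoreSqIntegrandGt_nonneg M hG _)]

theorem lintegral_score_sq_eq {Ω : Type*} [MeasurableSpace Ω] {ℙ : Measure Ω}
    [IsFiniteMeasure ℙ] {M : ℝ} (hM : 0 < M) {Ev V W : Ω → ℝ} (hEv : Measurable Ev)
    (hV : Measurable V) (hW : Measurable W)
    (hjoint : ℙ.map (fun ω => (Ev ω, V ω)) =
      volume.withDensity (fun p => ENNReal.ofReal (incubationDensity M p)))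
    (hindep : ProbabilityTheory.IndepFun (fun ω => (Ev ω, V ω)) W ℙ)
    (hφ : Measurable φ) (hG : Monotone G)
    (hGcdf : ∀ s, ℙ.map W (Iic s) = ENNReal.ofReal (G s)) (hG_nonneg : ∀ s, 0 ≤ G s)
    (hG0 : ∀ s ≤ 0, G s = 0) :
    ∫⁻ ω, ENNReal.ofReal (score φ G (Ev ω) (V ω + W ω) ^ 2) ∂ℙ =
      ENNReal.ofReal (1 / M) * ((∫⁻ p, ENNReal.ofReal (scoreSqIntegrandLe M φ G p)) +
        ∫⁻ p, ENNReal.ofReal (scoreSqIntegrandGt M φ G p)) := by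
  have hGm := hG.measurable
  rw [lintegral_comp_add_of_indepFun (f := fun p => ENNReal.ofReal (score φ G p.1 p.2 ^ 2))
      (hEv.prodMk hV) hW (measurable_incubationDensity M).ennreal_ofReal hjoint hindep
      ((measurable_score hφ hGm).pow_const 2).ennreal_ofReal,
    ← lintegral_add_left (by fun_prop),
    ← lintegral_const_mul _ (by fun_prop)]
  refine lintegral_congr_ae ?_
  filter_upwards [ae_fst_ne_and_measure_singleton_snd_eq_zero (ℙ.map W) M] with p ⟨hpM, hp⟩
  rw [lintegral_incubationDensity_sub, measure_Ioo_eq_ofReal_sub hGcdf hG hG_nonneg hp]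
  exact ofReal_rate_mul_mul_score_sq_eq hM hG hG_nonneg hG0 hpM

end Score

theorem integral_eq_mul_add_mul_of_lintegral_eq {α β : Type*} [MeasurableSpace α]
    [MeasurableSpace β] {μ : Measure α} {ν : Measure β} {f : α → ℝ} {g h : β → ℝ}
    (hf : 0 ≤ f) (hg : 0 ≤ g) (hh : 0 ≤ h) (hfm : AEStronglyMeasurable f μ)
    (hgm : AEStronglyMeasurable g ν) (hhm : AEStronglyMeasurable h ν) {c : ℝ} (hc : 0 < c)
    (hfin : ∫⁻ x, ENNReal.ofReal (f x) ∂μ ≠ ∞)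
    (heq : ∫⁻ x, ENNReal.ofReal (f x) ∂μ = ENNReal.ofReal c *
      ((∫⁻ y, ENNReal.ofReal (g y) ∂ν) + ∫⁻ y, ENNReal.ofReal (h y) ∂ν)) :
    ∫ x, f x ∂μ = c * ∫ y, g y ∂ν + c * ∫ y, h y ∂ν := by
  have hsum : (∫⁻ y, ENNReal.ofReal (g y) ∂ν) + ∫⁻ y, ENNReal.ofReal (h y) ∂ν ≠ ∞ :=
    fun htop => hfin (heq ▸ ENNReal.mul_eq_top.mpr (.inl ⟨(ENNReal.ofReal_pos.mpr hc).ne', htop⟩))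
  rw [integral_eq_lintegral_of_nonneg_ae (.of_forall hf) hfm,
    integral_eq_lintegral_of_nonneg_ae (.of_forall hg) hgm,
    integral_eq_lintegral_of_nonneg_ae (.of_forall hh) hhm, heq, ENNReal.toReal_mul,
    ENNReal.toReal_add (ENNReal.add_ne_top.mp hsum).1 (ENNReal.add_ne_top.mp hsum).2,
    ENNReal.toReal_ofReal hc.le, mul_add]

theorem score_second_moment_identity_general
    (Ω : Type*) [MeasurableSpace Ω] (ℙ : Measure Ω) [IsProbabilityMeasure ℙ]
    (M M₁ : ℝ) (hMM₁ : M₁ ≤ M)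
    (Ev V W : Ω → ℝ) (hEv : Measurable Ev) (hV : Measurable V) (hW : Measurable W)
    (hjoint : Measure.map (fun ω => (Ev ω, V ω)) ℙ =
      volume.withDensity (fun p =>
        ENNReal.ofReal (if 0 < p.2 ∧ p.2 < p.1 ∧ p.1 < M then 1 / (M * p.1) else 0)))
    (G : ℝ → ℝ) (hGmono : Monotone G) (hGcdf : ∀ s, Measure.map W ℙ (Set.Iic s) = ENNReal.ofReal (G s))
    (hG0 : ∀ s : ℝ, s ≤ 0 → G s = 0) (hG1 : ∀ s : ℝ, M₁ ≤ s → G s = 1)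
    (hindep : ProbabilityTheory.IndepFun (fun ω => (Ev ω, V ω)) W ℙ)
    (φ : ℝ → ℝ) (hφcont : Continuous φ)
    (hφ0 : φ 0 = 0)
    (C : ℝ) (hφAC : ∀ s t : ℝ, |φ s - φ t| ≤ C * |G s - G t|)
    (θ : ℝ → ℝ → ℝ)
    (hθ : ∀ e s : ℝ, θ e s =
      if s ≤ e then φ s / G s else (φ s - φ (s - e)) / (G s - G (s - e))) :
    ∫ ω, (θ (Ev ω) (V ω + W ω)) ^ 2 ∂ℙ =
      (1 / M) * (∫ p : ℝ × ℝ,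
        if 0 < p.2 ∧ p.2 ≤ p.1 ∧ p.1 ≤ M then φ p.2 ^ 2 / (p.1 * G p.2) else 0)
      + (1 / M) * (∫ p : ℝ × ℝ,
        if 0 < p.1 ∧ p.1 < p.2 ∧ p.1 ≤ M then
          (φ p.2 - φ (p.2 - p.1)) ^ 2 / (p.1 * (G p.2 - G (p.2 - p.1))) else 0) := by
  obtain rfl : θ = score φ G := funext fun e => funext (hθ e)
  have hM₁ : 0 < M₁ := by
    by_contra! h
    simpa [hG1 M₁ le_rfl] using hG0 M₁ h
  have hM : 0 < M := hM₁.trans_le hMM₁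
  have hG_nonneg : ∀ s, 0 ≤ G s := fun s =>
    (hG0 _ (min_le_right s 0)).symm.le.trans (hGmono (min_le_left s 0))
  have hC : 0 ≤ C := by
    simpa [hG0 0 le_rfl, hG1 M₁ le_rfl] using (abs_nonneg _).trans (hφAC M₁ 0)
  have hscore_sq_le : ∀ e s, score φ G e s ^ 2 ≤ C ^ 2 := fun e s =>
    sq_le_sq.mpr ((abs_score_le hC hφAC hφ0 (hG0 0 le_rfl) e s).trans (le_abs_self C))
  have hφ := hφcont.measurable
  have hG := hGmono.measurable
  refine integral_eq_mul_add_mul_of_lintegral_eq (fun ω => sq_nonneg _)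
    (scoreSqIntegrandLe_nonneg M hG_nonneg) (scoreSqIntegrandGt_nonneg M hGmono)
    (((measurable_score hφ hG).comp (hEv.prodMk (hV.add hW))).pow_const 2).aestronglyMeasurable
    (by fun_prop) (by fun_prop) (by positivity) ?_
    (lintegral_score_sq_eq hM hEv hV hW hjoint hindep hφ hGmono hGcdf hG_nonneg hG0)
  exact ((lintegral_mono fun ω => ENNReal.ofReal_le_ofReal (hscore_sq_le _ _)).trans_lt
    (by simp)).ne

/-- Second-moment identity for the score in the incubation-time model:
`E[θ(E,S,Δ)²] = (1/M)∫_{0<s≤e≤M} φ(s)²/(e G(s)) + (1/M)∫_{0<e<s, e≤M}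
(φ(s)-φ(s-e))²/(e (G(s)-G(s-e)))`. -/
theorem score_second_moment_identity
    (Ω : Type*) [MeasurableSpace Ω] (ℙ : Measure Ω) [IsProbabilityMeasure ℙ]
    (M M₁ : ℝ) (hM₁ : 0 < M₁) (hMM₁ : M₁ ≤ M)
    (Ev V W : Ω → ℝ) (hEv : Measurable Ev) (hV : Measurable V) (hW : Measurable W)
    (hjoint : Measure.map (fun ω => (Ev ω, V ω)) ℙ =
      volume.withDensity (fun p =>
        ENNReal.ofReal (if 0 < p.2 ∧ p.2 < p.1 ∧ p.1 < M then 1 / (M * p.1) else 0)))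
    (G : ℝ → ℝ) (hGmono : Monotone G) (hGcdf : ∀ s, Measure.map W ℙ (Set.Iic s) = ENNReal.ofReal (G s))
    (hG0 : ∀ s : ℝ, s ≤ 0 → G s = 0) (hG1 : ∀ s : ℝ, M₁ ≤ s → G s = 1)
    (hindep : ProbabilityTheory.IndepFun (fun ω => (Ev ω, V ω)) W ℙ)
    (φ : ℝ → ℝ) (hφcont : Continuous φ)
    (hφ0 : φ 0 = 0) (hφM₁ : ∀ s : ℝ, M₁ ≤ s → φ s = 0)
    (C : ℝ) (hφAC : ∀ s t : ℝ, |φ s - φ t| ≤ C * |G s - G t|)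
    (θ : ℝ → ℝ → ℝ)
    (hθ : ∀ e s : ℝ, θ e s =
      if s ≤ e then φ s / G s else (φ s - φ (s - e)) / (G s - G (s - e))) :
    ∫ ω, (θ (Ev ω) (V ω + W ω)) ^ 2 ∂ℙ =
      (1 / M) * (∫ p : ℝ × ℝ,
        if 0 < p.2 ∧ p.2 ≤ p.1 ∧ p.1 ≤ M then φ p.2 ^ 2 / (p.1 * G p.2) else 0)
      + (1 / M) * (∫ p : ℝ × ℝ,
        if 0 < p.1 ∧ p.1 < p.2 ∧ p.1 ≤ M then
          (φ p.2 - φ (p.2 - p.1)) ^ 2 / (p.1 * (G p.2 - G (p.2 - p.1))) else 0) :=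
  score_second_moment_identity_general Ω ℙ M M₁ hMM₁ Ev V W hEv hV hW hjoint G hGmono hGcdf hG0 hG1
    hindep φ hφcont hφ0 C hφAC θ hθ
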